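/- arXiv:2605.24058 — 2 statements merged into one kernel-verified Lean document; each statement's English description precedes it below -/
import Mathlib

section
/- Under the sign-plus-noise model with deterministic ±1 sign arrays and mutually independent mean-zero residuals each with second moment at most ζ², the entrywise residual E_{ij} = (AB^T)_{ij} − μ_A μ_B Σ_k σ^A_{ik} σ^B_{jk} satisfies E[E_{ij}²] ≤ r·ζ²·(μ_A² + μ_B² + ζ²), and hence E[||E||_F²] ≤ N·M·r·ζ²·(μ_A² + μ_B² + ζ²). -/
/-!
Write `S = ∑ₖ Aᵢₖ Bⱼₖ`. Independence of `Aᵢₖ` and `Bⱼₖ` gives `E[S] = μ_A μ_B ∑ₖ σ^A_{ik} σ^B_{jk}`,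
so `E_{ij} = S - E[S]` and `E[E_{ij}²] = Var S`. The products `Aᵢₖ Bⱼₖ` for distinct `k` involve
disjoint sets of noise variables, hence are pairwise independent and `Var S = ∑ₖ Var (Aᵢₖ Bⱼₖ)`.
For independent `X, Y` one has `Var (XY) = Var X Var Y + E[X]² Var Y + E[Y]² Var X`, which here is
at most `ζ⁴ + μ_A² ζ² + μ_B² ζ²` since the signs square to one.
-/

open MeasureTheory ProbabilityTheory

section

variable {Ω : Type*} [MeasurableSpace Ω] {μ : Measure Ω}

lemma MeasureTheory.integral_sum_le_card_mul {ι : Type*} [Fintype ι] {f : ι → Ω → ℝ} {C : ℝ}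
    (hf : ∀ i, Integrable (f i) μ) (hC : ∀ i, ∫ ω, f i ω ∂μ ≤ C) :
    ∫ ω, ∑ i, f i ω ∂μ ≤ Fintype.card ι * C := by
  rw [integral_finsetSum _ fun i _ ↦ hf i]
  calc _ ≤ ∑ _i : ι, C := Finset.sum_le_sum fun i _ ↦ hC i
    _ = _ := by simp

namespace ProbabilityTheory

lemma IndepFun.memLp_two_mul {X Y : Ω → ℝ} (hXY : X ⟂ᵢ[μ] Y) (hX : MemLp X 2 μ)
    (hY : MemLp Y 2 μ) : MemLp (X * Y) 2 μ := by
  refine (memLp_two_iff_integrable_sq (hX.1.mul hY.1)).2 ?_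
  simp only [Pi.mul_apply, mul_pow]
  exact (hXY.comp (measurable_id.pow_const 2) (measurable_id.pow_const 2)).integrable_mul
    hX.integrable_sq hY.integrable_sq

lemma IndepFun.variance_mul [IsProbabilityMeasure μ] {X Y : Ω → ℝ} (hXY : X ⟂ᵢ[μ] Y)
    (hX : MemLp X 2 μ) (hY : MemLp Y 2 μ) :
    Var[X * Y; μ] = Var[X; μ] * Var[Y; μ] + μ[X] ^ 2 * Var[Y; μ] + μ[Y] ^ 2 * Var[X; μ] := by
  have hXY_sq : (X ^ 2) ⟂ᵢ[μ] (Y ^ 2) :=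
    hXY.comp (continuous_pow 2).measurable (continuous_pow 2).measurable
  rw [variance_eq_sub (hXY.memLp_two_mul hX hY), variance_eq_sub hX, variance_eq_sub hY, mul_pow,
    hXY_sq.integral_mul_eq_mul_integral (hX.1.pow 2) (hY.1.pow 2),
    hXY.integral_mul_eq_mul_integral hX.1 hY.1]
  ring

section SumOfProducts

variable {ι κ : Type*} [Fintype κ] {X : ι → Ω → ℝ} {a b : κ → ι}

lemma iIndepFun.integral_sum_mul (hX : iIndepFun X μ) (hint : ∀ i, Integrable (X i) μ)
    (hab : ∀ k, a k ≠ b k) :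
    ∫ ω, ∑ k, X (a k) ω * X (b k) ω ∂μ = ∑ k, μ[X (a k)] * μ[X (b k)] := by
  rw [integral_finsetSum (f := fun k ω ↦ X (a k) ω * X (b k) ω) _
    fun k _ ↦ (hX.indepFun (hab k)).integrable_mul (hint _) (hint _)]
  exact Finset.sum_congr rfl fun k _ ↦
    (hX.indepFun (hab k)).integral_mul_eq_mul_integral (hint _).1 (hint _).1

lemma iIndepFun.memLp_sum_mul (hX : iIndepFun X μ) (hL2 : ∀ i, MemLp (X i) 2 μ)
    (hab : ∀ k, a k ≠ b k) : MemLp (fun ω ↦ ∑ k, X (a k) ω * X (b k) ω) 2 μ :=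
  memLp_finsetSum _ fun k _ ↦ (hX.indepFun (hab k)).memLp_two_mul (hL2 _) (hL2 _)

lemma iIndepFun.variance_sum_mul [IsProbabilityMeasure μ] (hX : iIndepFun X μ)
    (hL2 : ∀ i, MemLp (X i) 2 μ) (ha : a.Injective) (hb : b.Injective) (hab : ∀ k l, a k ≠ b l) :
    Var[fun ω ↦ ∑ k, X (a k) ω * X (b k) ω; μ] = ∑ k, (Var[X (a k); μ] * Var[X (b k); μ]
      + μ[X (a k)] ^ 2 * Var[X (b k); μ] + μ[X (b k)] ^ 2 * Var[X (a k); μ]) := by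
  have hpair : ∀ k, X (a k) ⟂ᵢ[μ] X (b k) := fun k ↦ hX.indepFun (hab k k)
  have hsum : (fun ω ↦ ∑ k, X (a k) ω * X (b k) ω) = ∑ k, X (a k) * X (b k) := by
    ext ω
    simp
  rw [hsum, IndepFun.variance_sum fun k _ ↦ (hpair k).memLp_two_mul (hL2 _) (hL2 _)]
  · exact Finset.sum_congr rfl fun k _ ↦ (hpair k).variance_mul (hL2 _) (hL2 _)
  · intro k _ l _ hkl
    exact (hX.indepFun_prodMk_prodMk₀ (fun i ↦ (hL2 i).1.aemeasurable) (a k) (b k) (a l) (b l)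
      (ha.ne hkl) (hab k l) (hab l k).symm (hb.ne hkl)).comp
        (measurable_fst.mul measurable_snd) (measurable_fst.mul measurable_snd)

lemma iIndepFun.variance_sum_mul_le [IsProbabilityMeasure μ] (hX : iIndepFun X μ)
    (hL2 : ∀ i, MemLp (X i) 2 μ) (ha : a.Injective) (hb : b.Injective) (hab : ∀ k l, a k ≠ b l)
    {m₁ m₂ v : ℝ} (hm₁ : ∀ k, μ[X (a k)] ^ 2 ≤ m₁) (hm₂ : ∀ k, μ[X (b k)] ^ 2 ≤ m₂)
    (hv : ∀ i, Var[X i; μ] ≤ v) :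
    Var[fun ω ↦ ∑ k, X (a k) ω * X (b k) ω; μ] ≤ Fintype.card κ * (v * (m₁ + m₂ + v)) := by
  rw [hX.variance_sum_mul hL2 ha hb hab]
  calc _ ≤ ∑ _k : κ, v * (m₁ + m₂ + v) := Finset.sum_le_sum fun k _ ↦ by
        nlinarith [hm₁ k, hm₂ k, hv (a k), hv (b k), variance_nonneg (X (a k)) μ,
          variance_nonneg (X (b k)) μ, sq_nonneg μ[X (a k)], sq_nonneg μ[X (b k)]]
    _ = _ := by simp

end SumOfProducts

end ProbabilityTheory

end

theorem residual_second_moment_general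
    {Ω : Type*} [MeasurableSpace Ω] (μ : Measure Ω) [IsProbabilityMeasure μ]
    (N M r : ℕ) (μA μB ζ : ℝ)
    (σA : Fin N → Fin r → ℝ) (σB : Fin M → Fin r → ℝ)
    (hσA : ∀ i k, σA i k = 1 ∨ σA i k = -1)
    (hσB : ∀ j k, σB j k = 1 ∨ σB j k = -1)
    (ξ : (Fin N × Fin r) ⊕ (Fin M × Fin r) → Ω → ℝ)
    (hindep : iIndepFun ξ μ)
    (hL2 : ∀ idx, MemLp (ξ idx) 2 μ)
    (hmean : ∀ idx, ∫ ω, ξ idx ω ∂μ = 0)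
    (hvar : ∀ idx, ∫ ω, (ξ idx ω) ^ 2 ∂μ ≤ ζ ^ 2)
    (A : Fin N → Fin r → Ω → ℝ) (B : Fin M → Fin r → Ω → ℝ)
    (hA : ∀ i k ω, A i k ω = μA * σA i k + ξ (Sum.inl (i, k)) ω)
    (hB : ∀ j k ω, B j k ω = μB * σB j k + ξ (Sum.inr (j, k)) ω)
    (E : Fin N → Fin M → Ω → ℝ)
    (hE : ∀ i j ω, E i j ω =
      (∑ k, A i k ω * B j k ω) - μA * μB * ∑ k, σA i k * σB j k) :
    (∀ (i : Fin N) (j : Fin M),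
        ∫ ω, (E i j ω) ^ 2 ∂μ ≤ r * ζ ^ 2 * (μA ^ 2 + μB ^ 2 + ζ ^ 2)) ∧
      ∫ ω, (∑ i, ∑ j, (E i j ω) ^ 2) ∂μ ≤
        N * M * r * ζ ^ 2 * (μA ^ 2 + μB ^ 2 + ζ ^ 2) := by
  let c : (Fin N × Fin r) ⊕ (Fin M × Fin r) → ℝ :=
    Sum.elim (fun p ↦ μA * σA p.1 p.2) (fun p ↦ μB * σB p.1 p.2)
  -- the entries of `A` and `B`, indexed like the noise
  let Z : (Fin N × Fin r) ⊕ (Fin M × Fin r) → Ω → ℝ := fun idx ω ↦ c idx + ξ idx ω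
  have hZ : iIndepFun Z μ :=
    hindep.comp (fun idx x ↦ c idx + x) fun idx ↦ measurable_const_add (c idx)
  have hZL2 : ∀ idx, MemLp (Z idx) 2 μ := fun idx ↦ (memLp_const (c idx)).add (hL2 idx)
  have hZmean : ∀ idx, μ[Z idx] = c idx := fun idx ↦ by
    simp [Z, integral_add, (hL2 idx).integrable one_le_two, hmean]
  have hZvar : ∀ idx, Var[Z idx; μ] ≤ ζ ^ 2 := fun idx ↦
    ((variance_const_add (hL2 idx).1 (c idx)).trans
      (variance_of_integral_eq_zero (hL2 idx).1.aemeasurable (hmean idx))).trans_le (hvar idx)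
  let S : Fin N → Fin M → Ω → ℝ := fun i j ω ↦ ∑ k, Z (.inl (i, k)) ω * Z (.inr (j, k)) ω
  have hES : ∀ i j, E i j = fun ω ↦ S i j ω - μ[S i j] := fun i j ↦ by
    ext ω
    rw [hE, hZ.integral_sum_mul (fun idx ↦ (hZL2 idx).integrable one_le_two) (by simp)]
    simp only [hZmean]
    simp [S, Z, c, hA, hB, Finset.mul_sum, mul_mul_mul_comm]
  have hSL2 : ∀ i j, MemLp (S i j) 2 μ := fun i j ↦ hZ.memLp_sum_mul hZL2 (by simp)
  have hentry : ∀ i j, ∫ ω, E i j ω ^ 2 ∂μ ≤ r * ζ ^ 2 * (μA ^ 2 + μB ^ 2 + ζ ^ 2) := by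
    intro i j
    rw [hES, ← variance_eq_integral (hSL2 i j).aemeasurable]
    refine (hZ.variance_sum_mul_le (m₁ := μA ^ 2) (m₂ := μB ^ 2) hZL2
      (fun _ _ h ↦ by simpa using h) (fun _ _ h ↦ by simpa using h) (by simp)
      (fun k ↦ by simp [hZmean, c, mul_pow, sq_eq_one_iff.2 (hσA i k)])
      (fun k ↦ by simp [hZmean, c, mul_pow, sq_eq_one_iff.2 (hσB j k)]) hZvar).trans_eq ?_
    simp only [Fintype.card_fin]
    ring
  have hEint : ∀ i j, Integrable (fun ω ↦ E i j ω ^ 2) μ := fun i j ↦ by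
    rw [hES]
    exact ((hSL2 i j).sub (memLp_const _)).integrable_sq
  refine ⟨hentry, ?_⟩
  calc _ ≤ N * (M * (r * ζ ^ 2 * (μA ^ 2 + μB ^ 2 + ζ ^ 2))) := by
        simpa using integral_sum_le_card_mul (fun i ↦ integrable_finsetSum _ fun j _ ↦ hEint i j)
          fun i ↦ integral_sum_le_card_mul (hEint i) (hentry i)
    _ = _ := by ring

/-- Second-moment bound on the entrywise residual in the sign-plus-noise model:
`E[E_{ij}²] ≤ r·ζ²·(μA² + μB² + ζ²)`, hence
`E[‖E‖_F²] ≤ N·M·r·ζ²·(μA² + μB² + ζ²)`. -/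
theorem residual_second_moment
    {Ω : Type*} [MeasurableSpace Ω] (μ : Measure Ω) [IsProbabilityMeasure μ]
    (N M r : ℕ) (μA μB ζ : ℝ) (hμA : 0 < μA) (hμB : 0 < μB) (hζ : 0 < ζ)
    (σA : Fin N → Fin r → ℝ) (σB : Fin M → Fin r → ℝ)
    (hσA : ∀ i k, σA i k = 1 ∨ σA i k = -1)
    (hσB : ∀ j k, σB j k = 1 ∨ σB j k = -1)
    (ξ : (Fin N × Fin r) ⊕ (Fin M × Fin r) → Ω → ℝ)
    (hindep : iIndepFun ξ μ)
    (hL2 : ∀ idx, MemLp (ξ idx) 2 μ)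
    (hmean : ∀ idx, ∫ ω, ξ idx ω ∂μ = 0)
    (hvar : ∀ idx, ∫ ω, (ξ idx ω) ^ 2 ∂μ ≤ ζ ^ 2)
    (A : Fin N → Fin r → Ω → ℝ) (B : Fin M → Fin r → Ω → ℝ)
    (hA : ∀ i k ω, A i k ω = μA * σA i k + ξ (Sum.inl (i, k)) ω)
    (hB : ∀ j k ω, B j k ω = μB * σB j k + ξ (Sum.inr (j, k)) ω)
    (E : Fin N → Fin M → Ω → ℝ)
    (hE : ∀ i j ω, E i j ω =
      (∑ k, A i k ω * B j k ω) - μA * μB * ∑ k, σA i k * σB j k) :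
    (∀ (i : Fin N) (j : Fin M),
        ∫ ω, (E i j ω) ^ 2 ∂μ ≤ r * ζ ^ 2 * (μA ^ 2 + μB ^ 2 + ζ ^ 2)) ∧
      ∫ ω, (∑ i, ∑ j, (E i j ω) ^ 2) ∂μ ≤
        N * M * r * ζ ^ 2 * (μA ^ 2 + μB ^ 2 + ζ ^ 2) :=
  residual_second_moment_general μ N M r μA μB ζ σA σB hσA hσB ξ hindep hL2 hmean hvar A B hA hB E
    hE
end

section
/- With σ^A ∈ {±1}^{N×r} and σ^B ∈ {±1}^{M×r} jointly i.i.d. Rademacher and independent of each other, define W_{ij} = Σ_k σ^A_{ik} σ^B_{jk} and Z = Σ_{i,j} W_{ij}². Then Var(Z) = 2·r·(r−1)·N·M. -/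
/-!
Write `χ_s = ∏_{p ∈ s} σ_p` for a finite set `s` of entries. Since `σ_p² = 1`,
`χ_s χ_t = χ_{s ∆ t}`, and by independence and `E σ_p = 0`, `E χ_s = [s = ∅]`; hence
`E[χ_s χ_t] = [s = t]`. Now `W_{ij} = Σ_k χ_{{σᴬ_{ik}, σᴮ_{jk}}}`, so
`Z = NMr + Σ_{i,j,k≠l} χ_{R_{ijkl}}` with `R_{ijkl} = {σᴬ_{ik}, σᴬ_{il}, σᴮ_{jk}, σᴮ_{jl}}`.
The rectangles `R` are nonempty, so `E Z = NMr`, and each of them arises from exactly the two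
tuples `(i,j,k,l)` and `(i,j,l,k)`, so `Var Z = 2 · #{(i,j,k,l) : k ≠ l} = 2NMr(r-1)`.
-/

open MeasureTheory ProbabilityTheory Finset
open scoped symmDiff

theorem Finset.prod_mul_prod_eq_prod_symmDiff {ι M : Type*} [CommMonoid M] [DecidableEq ι]
    {f : ι → M} (hf : ∀ p, f p * f p = 1) (s t : Finset ι) :
    (∏ p ∈ s, f p) * ∏ p ∈ t, f p = ∏ p ∈ s ∆ t, f p := by
  rw [← prod_union_inter, ← sup_eq_union, ← symmDiff_sup_inf, sup_eq_union, inf_eq_inter,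
    prod_union (s₂ := s ∩ t) (disjoint_symmDiff_inf s t), mul_assoc, ← prod_mul_distrib]
  simp [hf]

theorem integral_rademacher_eq_zero {Ω : Type*} [MeasurableSpace Ω] {μ : Measure Ω}
    [IsProbabilityMeasure μ] {X : Ω → ℝ} (hX : Measurable X) (hpm : ∀ ω, X ω = 1 ∨ X ω = -1)
    (hhalf : μ {ω | X ω = 1} = 1 / 2) : ∫ ω, X ω ∂μ = 0 := by
  set A := {ω | X ω = 1}
  have hA : MeasurableSet A := hX (measurableSet_singleton 1)
  have hAc : μ Aᶜ = 1 / 2 := by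
    rw [prob_compl_eq_one_sub hA, hhalf, one_div, ENNReal.one_sub_inv_two]
  have hint : Integrable X μ := Integrable.of_bound hX.aestronglyMeasurable 1
    (.of_forall fun ω => by rcases hpm ω with h | h <;> simp [h])
  rw [← integral_add_compl hA hint, setIntegral_congr_fun hA (fun ω (h : X ω = 1) => h),
    setIntegral_congr_fun hA.compl (fun ω h => (hpm ω).resolve_left h)]
  simp [measureReal_def, hhalf, hAc]

def walsh {ι Ω : Type*} (σ : ι → Ω → ℝ) (s : Finset ι) (ω : Ω) : ℝ := ∏ p ∈ s, σ p ω

section Walsh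

variable {ι Ω : Type*} {σ : ι → Ω → ℝ}

theorem walsh_symmDiff [DecidableEq ι] (hpm : ∀ p ω, σ p ω = 1 ∨ σ p ω = -1) (s t : Finset ι)
    (ω : Ω) : walsh σ (s ∆ t) ω = walsh σ s ω * walsh σ t ω :=
  (prod_mul_prod_eq_prod_symmDiff (fun p => mul_self_eq_one_iff.2 (hpm p ω)) s t).symm

theorem sq_sum_walsh [DecidableEq ι] {κ : Type*} [DecidableEq κ]
    (hpm : ∀ p ω, σ p ω = 1 ∨ σ p ω = -1) (f : κ → Finset ι) (K : Finset κ) (ω : Ω) :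
    (∑ k ∈ K, walsh σ (f k) ω) ^ 2 = #K + ∑ kl ∈ K.offDiag, walsh σ (f kl.1 ∆ f kl.2) ω := by
  rw [sq, sum_mul_sum, ← sum_product', ← diag_union_offDiag, sum_union (disjoint_diag_offDiag K),
    sum_congr rfl fun kk hkk => by rw [(mem_diag.1 hkk).2, ← walsh_symmDiff hpm, symmDiff_self]]
  simp only [walsh_symmDiff hpm]
  simp [walsh]

variable [MeasurableSpace Ω] {μ : Measure Ω}

theorem integrable_walsh [IsFiniteMeasure μ] (hmeas : ∀ p, Measurable (σ p))
    (hpm : ∀ p ω, σ p ω = 1 ∨ σ p ω = -1) (s : Finset ι) : Integrable (walsh σ s) μ := by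
  refine Integrable.of_bound (Finset.measurable_prod s fun p _ => hmeas p).aestronglyMeasurable 1
    (.of_forall fun ω => ?_)
  rw [walsh, Real.norm_eq_abs, abs_prod]
  exact (prod_eq_one fun p _ => by rcases hpm p ω with h | h <;> simp [h]).le

theorem integral_walsh_eq_zero (hindep : iIndepFun σ μ) (hmeas : ∀ p, Measurable (σ p))
    (hmean : ∀ p, ∫ ω, σ p ω ∂μ = 0) {s : Finset ι} (hs : s.Nonempty) :
    ∫ ω, walsh σ s ω ∂μ = 0 := by
  obtain ⟨p, hp⟩ := hs
  have h := (hindep.precomp (Subtype.val_injective (p := (· ∈ s))))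
    |>.integral_fun_prod_eq_prod_integral fun q => (hmeas q).aestronglyMeasurable
  simp only [walsh, ← prod_coe_sort s] at h ⊢
  rw [h]
  exact prod_eq_zero (mem_univ ⟨p, hp⟩) (hmean p)

variable [IsProbabilityMeasure μ]

theorem integral_walsh_mul_walsh [DecidableEq ι] (hindep : iIndepFun σ μ)
    (hmeas : ∀ p, Measurable (σ p)) (hpm : ∀ p ω, σ p ω = 1 ∨ σ p ω = -1)
    (hmean : ∀ p, ∫ ω, σ p ω ∂μ = 0) (s t : Finset ι) :
    ∫ ω, walsh σ s ω * walsh σ t ω ∂μ = if s = t then 1 else 0 := by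
  simp_rw [← walsh_symmDiff hpm]
  split_ifs with hst
  · simp [hst, walsh]
  · exact integral_walsh_eq_zero hindep hmeas hmean
      (nonempty_iff_ne_empty.2 (symmDiff_eq_bot.not.2 hst))

theorem integral_sq_sum_walsh [DecidableEq ι] {τ : Type*} (hindep : iIndepFun σ μ)
    (hmeas : ∀ p, Measurable (σ p)) (hpm : ∀ p ω, σ p ω = 1 ∨ σ p ω = -1)
    (hmean : ∀ p, ∫ ω, σ p ω ∂μ = 0) (S : τ → Finset ι) (T : Finset τ) :
    ∫ ω, (∑ t ∈ T, walsh σ (S t) ω) ^ 2 ∂μ = ∑ t ∈ T, (#{t' ∈ T | S t = S t'} : ℝ) := by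
  have hint : ∀ t t', Integrable (fun ω => walsh σ (S t) ω * walsh σ (S t') ω) μ := fun t t' =>
    (integrable_walsh hmeas hpm (S t ∆ S t')).congr (.of_forall (walsh_symmDiff hpm _ _))
  simp_rw [sq, sum_mul_sum]
  rw [integral_finsetSum _ fun t _ => integrable_finsetSum _ fun t' _ => hint t t']
  refine sum_congr rfl fun t _ => ?_
  rw [integral_finsetSum _ fun t' _ => hint t t']
  simp_rw [integral_walsh_mul_walsh hindep hmeas hpm hmean, sum_boole]

end Walsh

def bond {α β κ : Type*} (i : α) (j : β) (k : κ) : Finset ((α × κ) ⊕ (β × κ)) :=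
  ({(i, k)} : Finset (α × κ)).disjSum {(j, k)}

section Bond

variable {α β κ : Type*}

theorem walsh_bond {Ω : Type*} (σ : (α × κ) ⊕ (β × κ) → Ω → ℝ) (i : α) (j : β) (k : κ) (ω : Ω) :
    walsh σ (bond i j k) ω = σ (.inl (i, k)) ω * σ (.inr (j, k)) ω := by
  simp [walsh, bond]

variable [DecidableEq α] [DecidableEq β] [DecidableEq κ]

/-- For `k ≠ l` this is `{σᴬ_{ik}, σᴬ_{il}, σᴮ_{jk}, σᴮ_{jl}}`; for `k = l` it is empty. -/
def rectangle (t : (α × β) × (κ × κ)) : Finset ((α × κ) ⊕ (β × κ)) :=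
  bond t.1.1 t.1.2 t.2.1 ∆ bond t.1.1 t.1.2 t.2.2

theorem rectangle_nonempty {i : α} {j : β} {k l : κ} (hkl : k ≠ l) :
    (rectangle ((i, j), (k, l))).Nonempty :=
  ⟨.inl (i, k), by simp [rectangle, bond, mem_symmDiff, hkl]⟩

theorem rectangle_eq_rectangle_iff {i i' : α} {j j' : β} {k l k' l' : κ} (hkl : k ≠ l)
    (hkl' : k' ≠ l') :
    rectangle ((i, j), (k, l)) = rectangle ((i', j'), (k', l')) ↔
      i = i' ∧ j = j' ∧ (k = k' ∧ l = l' ∨ k = l' ∧ l = k') := by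
  constructor
  · intro h
    have h1 := Finset.ext_iff.1 h (.inl (i, k))
    have h2 := Finset.ext_iff.1 h (.inl (i, l))
    have h3 := Finset.ext_iff.1 h (.inr (j, k))
    simp only [rectangle, bond, mem_symmDiff, inl_mem_disjSum, inr_mem_disjSum, mem_singleton,
      Prod.mk.injEq] at h1 h2 h3
    grind
  · rintro ⟨rfl, rfl, ⟨rfl, rfl⟩ | ⟨rfl, rfl⟩⟩
    · rfl
    · exact symmDiff_comm _ _

theorem card_filter_rectangle_eq [Fintype α] [Fintype β] [Fintype κ]
    {t : (α × β) × (κ × κ)} (ht : t ∈ univ ×ˢ univ.offDiag) :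
    #{t' ∈ (univ : Finset (α × β)) ×ˢ (univ : Finset κ).offDiag | rectangle t = rectangle t'} =
      2 := by
  obtain ⟨⟨i, j⟩, k, l⟩ := t
  have hkl : k ≠ l := by simpa using ht
  have : {t' ∈ (univ : Finset (α × β)) ×ˢ (univ : Finset κ).offDiag |
      rectangle ((i, j), (k, l)) = rectangle t'} = {((i, j), (k, l)), ((i, j), (l, k))} := by
    ext ⟨⟨i', j'⟩, k', l'⟩
    simp only [mem_filter, mem_product, mem_offDiag, mem_univ, true_and, mem_insert,
      mem_singleton, Prod.mk.injEq]
    constructor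
    · rintro ⟨hk'l', h⟩
      rw [rectangle_eq_rectangle_iff hkl hk'l'] at h
      grind
    · rintro (⟨⟨rfl, rfl⟩, rfl, rfl⟩ | ⟨⟨rfl, rfl⟩, rfl, rfl⟩)
      · exact ⟨hkl, rfl⟩
      · exact ⟨hkl.symm, (rectangle_eq_rectangle_iff hkl hkl.symm).2 ⟨rfl, rfl, .inr ⟨rfl, rfl⟩⟩⟩
  rw [this, card_pair (by simp [hkl])]

end Bond

/-- With jointly i.i.d. Rademacher arrays `σᴬ ∈ {±1}^{N×r}`, `σᴮ ∈ {±1}^{M×r}`,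
`W_{ij} = Σ_k σᴬ_{ik} σᴮ_{jk}` and `Z = Σ_{ij} W_{ij}²` satisfy
`Var(Z) = 2·r·(r−1)·N·M`. -/
theorem rademacher_bilinear_variance
    {Ω : Type*} [MeasurableSpace Ω] (μ : Measure Ω) [IsProbabilityMeasure μ]
    (N M r : ℕ)
    (σ : (Fin N × Fin r) ⊕ (Fin M × Fin r) → Ω → ℝ)
    (hindep : iIndepFun σ μ)
    (hmeas : ∀ idx, Measurable (σ idx))
    (hpm : ∀ idx ω, σ idx ω = 1 ∨ σ idx ω = -1)
    (hhalf : ∀ idx, μ {ω | σ idx ω = 1} = 1 / 2)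
    (W : Fin N → Fin M → Ω → ℝ)
    (hW : ∀ i j ω, W i j ω = ∑ k, σ (Sum.inl (i, k)) ω * σ (Sum.inr (j, k)) ω)
    (Z : Ω → ℝ) (hZ : ∀ ω, Z ω = ∑ i, ∑ j, (W i j ω) ^ 2) :
    ∫ ω, (Z ω - ∫ ω', Z ω' ∂μ) ^ 2 ∂μ = 2 * r * (r - 1) * N * M := by
  set T := (univ : Finset (Fin N × Fin M)) ×ˢ (univ : Finset (Fin r)).offDiag
  have hmean : ∀ p, ∫ ω, σ p ω ∂μ = 0 := fun p =>
    integral_rademacher_eq_zero (hmeas p) (hpm p) (hhalf p)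
  have hZT : ∀ ω, Z ω = N * M * r + ∑ t ∈ T, walsh σ (rectangle t) ω := by
    intro ω
    simp_rw [hZ, hW, ← walsh_bond, sq_sum_walsh hpm, sum_add_distrib]
    simp only [T, rectangle, sum_product, Fintype.sum_prod_type, sum_const, card_univ,
      Fintype.card_fin, nsmul_eq_mul, add_left_inj]
    ring
  have hEZ : ∫ ω, Z ω ∂μ = N * M * r := by
    rw [integral_congr_ae (.of_forall hZT), integral_add (integrable_const _)
      (integrable_finsetSum _ fun t _ => integrable_walsh hmeas hpm _), integral_finsetSum _
      fun t _ => integrable_walsh hmeas hpm _, sum_eq_zero fun t ht =>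
      integral_walsh_eq_zero hindep hmeas hmean (rectangle_nonempty (by simpa [T] using ht))]
    simp
  calc ∫ ω, (Z ω - ∫ ω', Z ω' ∂μ) ^ 2 ∂μ = ∫ ω, (∑ t ∈ T, walsh σ (rectangle t) ω) ^ 2 ∂μ := by
        simp_rw [hEZ, hZT, add_sub_cancel_left]
    _ = ∑ t ∈ T, (2 : ℝ) := by
        rw [integral_sq_sum_walsh hindep hmeas hpm hmean]
        exact sum_congr rfl fun t ht => by rw [card_filter_rectangle_eq ht]; norm_num
    _ = 2 * r * (r - 1) * N * M := by
        simp only [T, sum_const, card_product, card_univ, Fintype.card_prod, Fintype.card_fin,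
          offDiag_card, nsmul_eq_mul, Nat.cast_mul, Nat.cast_sub (Nat.le_mul_self r)]
        ring
end
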